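/- Let A be a finite nonempty set, Ω = A^ℤ, μ a stationary probability measure, and D a shift-invariant sub-σ-algebra with D ⊆ F_{−∞}^0 (the σ-algebra of coordinates with index ≤ 0). Then μ-almost surely, (1/N)∑_{n=0}^{N-1} ‖μ(ζ_n = · | F_0^{n-1}) − μ(ζ_n = · | F_0^{n-1} ∨ D)‖ → 0 as N → ∞. -/

import Mathlib

open MeasureTheory Filter

/-- The left shift on `A^ℤ`. -/
def shiftZ {A : Type*} (ω : ℤ → A) : ℤ → A := fun n => ω (n + 1)

/-- The σ-algebra on `A^ℤ` generated by the coordinates with index in `s`. -/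
def coordSigma (A : Type*) [MeasurableSpace A] (s : Set ℤ) : MeasurableSpace (ℤ → A) :=
  ⨆ k ∈ s, MeasurableSpace.comap (fun ω : ℤ → A => ω k) inferInstance

/-- A version of the conditional probability `μ(ζ_n = a | m)`, as a conditional
expectation of the indicator of `{ζ_n = a}`. -/
noncomputable def condProbCoord {A : Type*} [MeasurableSpace A] [DecidableEq A]
    (μ : Measure (ℤ → A)) (m : MeasurableSpace (ℤ → A)) (n : ℤ) (a : A) : (ℤ → A) → ℝ :=
  μ[fun ω => if ω n = a then (1 : ℝ) else 0 | m]

/-!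
By stationarity, the `n`-th summand is `g n ∘ T^n`, where `g n` is the gap between the predictions
of `ζ_0` from `F_{-n}^{-1}` and from `F_{-n}^{-1} ∨ D`. Shift invariance lets `D ⊆ F_{-∞}^0` be
pushed into `F_{-∞}^{-1}`, so by Lévy's upward theorem both predictions converge to the prediction
from `F_{-∞}^{-1}` and `g n → 0` a.s. For such a bounded sequence, Hopf's maximal ergodic
inequality applied to the tail suprema `sup_{k ≥ m} |g k|`, whose integrals tend to `0`, shows that
the Cesàro means of `g n ∘ T^n` tend to `0` a.s.
-/

open Finset Topology

section Hopf

variable {α : Type*} {T : α → α} {f : α → ℝ}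

/-- `birkhoffMax T f N x = max (0, S₁ x, …, S_N x)` where `S_k = birkhoffSum T f k`. -/
noncomputable def birkhoffMax (T : α → α) (f : α → ℝ) : ℕ → α → ℝ
  | 0 => fun _ => 0
  | N + 1 => fun x => max 0 (f x + birkhoffMax T f N (T x))

theorem birkhoffMax_succ (N : ℕ) (x : α) :
    birkhoffMax T f (N + 1) x = max 0 (f x + birkhoffMax T f N (T x)) := rfl

theorem birkhoffMax_nonneg (N : ℕ) (x : α) : 0 ≤ birkhoffMax T f N x := by
  cases N with
  | zero => exact le_rfl
  | succ N => exact le_max_left _ _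

theorem birkhoffSum_le_birkhoffMax (N : ℕ) (x : α) :
    birkhoffSum T f N x ≤ birkhoffMax T f N x := by
  induction N generalizing x with
  | zero => simp [birkhoffMax]
  | succ N ih =>
    rw [birkhoffSum_succ', birkhoffMax_succ]
    exact le_max_of_le_right (add_le_add_right (ih (T x)) _)

theorem birkhoffMax_monotone (x : α) : Monotone (birkhoffMax T f · x) := by
  refine monotone_nat_of_le_succ fun N => ?_
  induction N generalizing x with
  | zero => exact birkhoffMax_nonneg 1 x
  | succ N ih =>
    rw [birkhoffMax_succ, birkhoffMax_succ]
    exact max_le_max le_rfl (add_le_add_right (ih (T x)) _)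

variable [MeasurableSpace α] {μ : Measure α}

theorem measurable_birkhoffMax (hT : Measurable T) (hf : Measurable f) (N : ℕ) :
    Measurable (birkhoffMax T f N) := by
  induction N with
  | zero => exact measurable_const
  | succ N ih => exact measurable_const.max (hf.add (ih.comp hT))

theorem integrable_birkhoffMax (hT : MeasurePreserving T μ μ) (hf : Integrable f μ) (N : ℕ) :
    Integrable (birkhoffMax T f N) μ := by
  induction N with
  | zero => exact integrable_zero _ _ _
  | succ N ih => exact (integrable_zero _ _ _).sup (hf.add (hT.integrable_comp_of_integrable ih))

/-- On `{0 < M_{N+1}}` one has `f = M_{N+1} - M_N ∘ T`, and `M_{N+1}` vanishes off this set. -/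
theorem setIntegral_birkhoffMax_pos_nonneg (hT : MeasurePreserving T μ μ) (hfm : Measurable f)
    (hf : Integrable f μ) (N : ℕ) :
    0 ≤ ∫ x in {x | 0 < birkhoffMax T f N x}, f x ∂μ := by
  rcases N with - | N
  · simp [birkhoffMax]
  set M := birkhoffMax T f
  set E := {x | 0 < M (N + 1) x}
  have hE : MeasurableSet E :=
    measurableSet_lt measurable_const (measurable_birkhoffMax hT.measurable hfm _)
  have hf_eq : ∀ x ∈ E, f x = M (N + 1) x - M N (T x) := fun x hx => by
    have hpos : 0 < f x + M N (T x) := by simpa [E, M, birkhoffMax_succ] using hx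
    simp only [M, birkhoffMax_succ, max_eq_right hpos.le, add_sub_cancel_right]
  have hME : ∫ x in E, M (N + 1) x ∂μ = ∫ x, M (N + 1) x ∂μ :=
    setIntegral_eq_integral_of_forall_compl_eq_zero fun x hx =>
      le_antisymm (not_lt.1 hx) (birkhoffMax_nonneg _ x)
  have hMT_int : Integrable (fun x => M N (T x)) μ :=
    hT.integrable_comp_of_integrable (integrable_birkhoffMax hT hf N)
  have hMT : ∫ x in E, M N (T x) ∂μ ≤ ∫ x, M N (T x) ∂μ :=
    setIntegral_le_integral hMT_int
      (Eventually.of_forall fun x => birkhoffMax_nonneg N (T x))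
  have hMT_eq : ∫ x, M N (T x) ∂μ = ∫ x, M N x ∂μ := by
    conv_rhs => rw [← hT.map_eq]
    exact (integral_map hT.aemeasurable
      (measurable_birkhoffMax hT.measurable hfm N).aestronglyMeasurable).symm
  have hmono : ∫ x, M N x ∂μ ≤ ∫ x, M (N + 1) x ∂μ :=
    integral_mono (integrable_birkhoffMax hT hf N) (integrable_birkhoffMax hT hf (N + 1))
      fun x => birkhoffMax_monotone x N.le_succ
  rw [setIntegral_congr_fun hE hf_eq,
    integral_sub (integrable_birkhoffMax hT hf _).integrableOn hMT_int.integrableOn, hME]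
  linarith

/-- **Hopf's maximal ergodic theorem.** -/
theorem setIntegral_iUnion_birkhoffMax_pos_nonneg (hT : MeasurePreserving T μ μ)
    (hfm : Measurable f) (hf : Integrable f μ) :
    0 ≤ ∫ x in ⋃ N, {x | 0 < birkhoffMax T f N x}, f x ∂μ :=
  ge_of_tendsto' (tendsto_setIntegral_of_monotone
      (fun N => measurableSet_lt measurable_const (measurable_birkhoffMax hT.measurable hfm N))
      (fun _ _ hNK x hx => hx.trans_le (birkhoffMax_monotone x hNK)) hf.integrableOn)
    (setIntegral_birkhoffMax_pos_nonneg hT hfm hf)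

theorem mul_measureReal_exists_birkhoffSum_gt_le_integral [IsFiniteMeasure μ]
    (hT : MeasurePreserving T μ μ) {h : α → ℝ} (hhm : Measurable h) (hh : Integrable h μ)
    (hh0 : 0 ≤ h) {ε : ℝ} (hε : 0 ≤ ε) :
    ε * μ.real {x | ∃ N : ℕ, ε * N < birkhoffSum T h N x} ≤ ∫ x, h x ∂μ := by
  set U := ⋃ N, {x | 0 < birkhoffMax T (h - fun _ => ε) N x}
  have hsub : {x | ∃ N : ℕ, ε * N < birkhoffSum T h N x} ⊆ U := by
    rintro x ⟨N, hN⟩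
    refine Set.mem_iUnion.2 ⟨N, lt_of_lt_of_le ?_ (birkhoffSum_le_birkhoffMax N x)⟩
    simpa [birkhoffSum_sub, birkhoffSum, mul_comm] using hN
  have hU := setIntegral_iUnion_birkhoffMax_pos_nonneg hT (hhm.sub measurable_const)
    (hh.sub (integrable_const ε))
  simp only [Pi.sub_apply] at hU
  rw [integral_sub hh.integrableOn (integrable_const ε).integrableOn, setIntegral_const,
    smul_eq_mul, mul_comm] at hU
  calc ε * μ.real {x | ∃ N : ℕ, ε * N < birkhoffSum T h N x}
      ≤ ε * μ.real U := mul_le_mul_of_nonneg_left (measureReal_mono hsub) hε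
    _ ≤ ∫ x in U, h x ∂μ := by linarith
    _ ≤ ∫ x, h x ∂μ := setIntegral_le_integral hh (Eventually.of_forall hh0)

end Hopf

theorem tendsto_div_atTop_of_forall_abs_le_add_mul {u : ℕ → ℝ}
    (h : ∀ ε > 0, ∃ c, ∀ᶠ N : ℕ in atTop, |u N| ≤ c + ε * N) :
    Tendsto (fun N : ℕ => u N / N) atTop (𝓝 0) := by
  refine Metric.tendsto_nhds.2 fun δ hδ => ?_
  obtain ⟨c, hc⟩ := h (δ / 2) (half_pos hδ)
  filter_upwards [hc, (tendsto_const_div_atTop_nhds_zero_nat c).eventually_lt_const (half_pos hδ),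
    eventually_gt_atTop 0] with N hN hcN hN0
  have hN0' : (0 : ℝ) < N := Nat.cast_pos.2 hN0
  rw [Real.dist_eq, sub_zero, abs_div, Nat.abs_cast, div_lt_iff₀ hN0']
  rw [div_lt_iff₀ hN0'] at hcN
  linarith

section TailSup

variable {α : Type*} {g : ℕ → α → ℝ} {C : ℝ}

/-- Truncated at `C` so that it stays bounded even where `|g n| ≤ C` fails. -/
noncomputable def tailSup (g : ℕ → α → ℝ) (C : ℝ) (m : ℕ) (x : α) : ℝ :=
  ⨆ k : ℕ, min |g (m + k) x| C

theorem bddAbove_range_min_abs (m : ℕ) (x : α) :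
    BddAbove (Set.range fun k => min |g (m + k) x| C) :=
  ⟨C, Set.forall_mem_range.2 fun _ => min_le_right _ _⟩

theorem tailSup_le (m : ℕ) (x : α) : tailSup g C m x ≤ C :=
  ciSup_le fun _ => min_le_right _ _

theorem tailSup_nonneg (hC : 0 ≤ C) (m : ℕ) (x : α) : 0 ≤ tailSup g C m x :=
  (le_min (abs_nonneg _) hC).trans (le_ciSup (bddAbove_range_min_abs m x) 0)

theorem norm_tailSup_le (hC : 0 ≤ C) (m : ℕ) (x : α) : ‖tailSup g C m x‖ ≤ C := by
  rw [Real.norm_of_nonneg (tailSup_nonneg hC m x)]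
  exact tailSup_le m x

theorem min_abs_le_tailSup {m n : ℕ} (hmn : m ≤ n) (x : α) : min |g n x| C ≤ tailSup g C m x := by
  obtain ⟨k, rfl⟩ := Nat.exists_eq_add_of_le hmn
  exact le_ciSup (bddAbove_range_min_abs m x) k

theorem tendsto_tailSup (hC : 0 ≤ C) {x : α} (hx : Tendsto (g · x) atTop (𝓝 0)) :
    Tendsto (tailSup g C · x) atTop (𝓝 0) := by
  refine Metric.tendsto_atTop.2 fun ε hε => ?_
  obtain ⟨M, hM⟩ := Metric.tendsto_atTop.1 hx (ε / 2) (half_pos hε)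
  refine ⟨M, fun m hm => ?_⟩
  rw [Real.dist_eq, sub_zero, abs_of_nonneg (tailSup_nonneg hC m x)]
  refine (ciSup_le fun k => (min_le_left _ _).trans ?_).trans_lt (half_lt_self hε)
  simpa [Real.dist_eq] using (hM (m + k) (by omega)).le

variable [MeasurableSpace α] {μ : Measure α} {T : α → α}

theorem measurable_tailSup (hg : ∀ n, Measurable (g n)) (m : ℕ) : Measurable (tailSup g C m) :=
  Measurable.iSup fun k => (hg (m + k)).abs.min measurable_const

theorem tendsto_integral_tailSup [IsFiniteMeasure μ] (hC : 0 ≤ C) (hg : ∀ n, Measurable (g n))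
    (hg0 : ∀ᵐ x ∂μ, Tendsto (g · x) atTop (𝓝 0)) :
    Tendsto (fun m => ∫ x, tailSup g C m x ∂μ) atTop (𝓝 0) := by
  simpa using tendsto_integral_of_dominated_convergence (fun _ => C)
    (fun m => (measurable_tailSup hg m).aestronglyMeasurable) (integrable_const C)
    (fun m => Eventually.of_forall (norm_tailSup_le hC m))
    (hg0.mono fun x hx => tendsto_tailSup hC hx)

theorem ae_exists_birkhoffSum_tailSup_le [IsFiniteMeasure μ] (hT : MeasurePreserving T μ μ)
    (hC : 0 ≤ C) (hg : ∀ n, Measurable (g n)) (hg0 : ∀ᵐ x ∂μ, Tendsto (g · x) atTop (𝓝 0))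
    {ε : ℝ} (hε : 0 < ε) :
    ∀ᵐ x ∂μ, ∃ m, ∀ N : ℕ, birkhoffSum T (tailSup g C m) N x ≤ ε * N := by
  set B := fun m => {x | ∃ N : ℕ, ε * N < birkhoffSum T (tailSup g C m) N x}
  have hB : ∀ m, μ.real (⋂ m, B m) ≤ ε⁻¹ * ∫ x, tailSup g C m x ∂μ := fun m => by
    rw [le_inv_mul_iff₀ hε]
    refine (mul_le_mul_of_nonneg_left (measureReal_mono (Set.iInter_subset B m)) hε.le).trans ?_
    exact mul_measureReal_exists_birkhoffSum_gt_le_integral hT (measurable_tailSup hg m)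
      ((integrable_const C).mono' (measurable_tailSup hg m).aestronglyMeasurable
        (Eventually.of_forall (norm_tailSup_le hC m)))
      (tailSup_nonneg hC m) hε.le
  have hlim : Tendsto (fun m => ε⁻¹ * ∫ x, tailSup g C m x ∂μ) atTop (𝓝 0) := by
    simpa using (tendsto_integral_tailSup hC hg hg0).const_mul ε⁻¹
  have hB0 : μ (⋂ m, B m) = 0 :=
    (measureReal_eq_zero_iff).1 (le_antisymm (ge_of_tendsto' hlim hB) measureReal_nonneg)
  filter_upwards [measure_eq_zero_iff_ae_notMem.1 hB0] with x hx
  simpa [B] using hx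

theorem ae_tendsto_sum_comp_iterate_div_of_tendsto_zero [IsProbabilityMeasure μ]
    (hT : MeasurePreserving T μ μ) (hg : ∀ n, Measurable (g n))
    (hgC : ∀ n, ∀ᵐ x ∂μ, |g n x| ≤ C) (hg0 : ∀ᵐ x ∂μ, Tendsto (g · x) atTop (𝓝 0)) :
    ∀ᵐ x ∂μ, Tendsto (fun N : ℕ => (∑ n ∈ range N, g n (T^[n] x)) / N) atTop (𝓝 0) := by
  obtain ⟨x₀, hx₀⟩ := (hgC 0).exists
  have hC : 0 ≤ C := (abs_nonneg _).trans hx₀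
  have horbit : ∀ᵐ x ∂μ, ∀ n, |g n (T^[n] x)| ≤ C :=
    ae_all_iff.2 fun n => (hT.iterate n).quasiMeasurePreserving.ae (hgC n)
  have htail : ∀ᵐ x ∂μ, ∀ j : ℕ, ∃ m, ∀ N : ℕ,
      birkhoffSum T (tailSup g C m) N x ≤ 1 / ((j : ℝ) + 1) * N :=
    ae_all_iff.2 fun j => ae_exists_birkhoffSum_tailSup_le hT hC hg hg0 Nat.one_div_pos_of_nat
  filter_upwards [horbit, htail] with x hCx hx
  refine tendsto_div_atTop_of_forall_abs_le_add_mul fun ε hε => ?_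
  obtain ⟨j, hj⟩ := exists_nat_one_div_lt hε
  obtain ⟨m, hm⟩ := hx j
  refine ⟨m * C, (eventually_ge_atTop m).mono fun N hN => ?_⟩
  have hhead : ∑ n ∈ range m, |g n (T^[n] x)| ≤ m * C := by
    simpa using sum_le_card_nsmul (range m) _ C fun n _ => hCx n
  have htail : ∑ n ∈ Ico m N, |g n (T^[n] x)| ≤ birkhoffSum T (tailSup g C m) N x :=
    calc ∑ n ∈ Ico m N, |g n (T^[n] x)|
        ≤ ∑ n ∈ Ico m N, tailSup g C m (T^[n] x) := sum_le_sum fun n hn => by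
          rw [← min_eq_left (hCx n)]
          exact min_abs_le_tailSup (mem_Ico.1 hn).1 _
      _ ≤ birkhoffSum T (tailSup g C m) N x :=
          sum_le_sum_of_subset_of_nonneg (range_eq_Ico N ▸ Ico_subset_Ico_left m.zero_le)
            fun _ _ _ => tailSup_nonneg hC m _
  calc |∑ n ∈ range N, g n (T^[n] x)|
      ≤ ∑ n ∈ range N, |g n (T^[n] x)| := abs_sum_le_sum_abs _ _
    _ = ∑ n ∈ range m, |g n (T^[n] x)| + ∑ n ∈ Ico m N, |g n (T^[n] x)| :=
        (sum_range_add_sum_Ico _ hN).symm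
    _ ≤ m * C + ε * N := by
        have := (hm N).trans (mul_le_mul_of_nonneg_right hj.le N.cast_nonneg)
        linarith

end TailSup

theorem condExp_comp_ae_eq {α β E : Type*} [NormedAddCommGroup E] [NormedSpace ℝ E]
    [CompleteSpace E] {mα : MeasurableSpace α} {m mβ : MeasurableSpace β} {μ : Measure α}
    {ν : Measure β} [IsFiniteMeasure μ] {f : α → β} (hf : MeasurePreserving f μ ν)
    (hm : m ≤ mβ) {g : β → E} (hg : Integrable g ν) :
    (ν[g|m]) ∘ f =ᵐ[μ] μ[g ∘ f | m.comap f] := by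
  have hm' : m.comap f ≤ mα := (MeasurableSpace.comap_mono hm).trans hf.measurable.comap_le
  have : IsFiniteMeasure ν := hf.map_eq ▸ inferInstance
  have hg_map : ∀ {F : β → E}, AEStronglyMeasurable F ν → AEStronglyMeasurable F (μ.map f) :=
    fun hF => hf.map_eq ▸ hF
  refine ae_eq_condExp_of_forall_setIntegral_eq hm' (hf.integrable_comp_of_integrable hg)
    (fun _ _ _ => (hf.integrable_comp_of_integrable integrable_condExp).integrableOn) ?_
    ((stronglyMeasurable_condExp.comp_measurable
      (Measurable.of_comap_le le_rfl)).aestronglyMeasurable)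
  rintro _ ⟨t, ht, rfl⟩ _
  rw [Function.comp_def, Function.comp_def,
    ← setIntegral_map (hm t ht) (hg_map integrable_condExp.aestronglyMeasurable)
      hf.aemeasurable,
    ← setIntegral_map (hm t ht) (hg_map hg.aestronglyMeasurable) hf.aemeasurable, hf.map_eq,
    setIntegral_condExp hm hg ht]

section Shift

variable {A : Type*}

theorem shiftZ_iterate (n : ℕ) : (shiftZ (A := A))^[n] = fun ω k => ω (k + n) := by
  induction n with
  | zero => funext ω k; simp
  | succ n ih =>
    funext ω k
    rw [Function.iterate_succ_apply', ih]
    simp only [shiftZ, Nat.cast_succ, add_assoc, add_comm (1 : ℤ)]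

variable {D : MeasurableSpace (ℤ → A)}

theorem comap_shiftZ_eq
    (hDinv : ∀ S : Set (ℤ → A), MeasurableSet[D] S ↔ MeasurableSet[D] (shiftZ '' S)) :
    D.comap shiftZ = D := by
  have hbij : Function.Bijective (shiftZ (A := A)) :=
    ⟨fun ω ω' h => funext fun k => by simpa [shiftZ] using congr_fun h (k - 1),
      fun ω => ⟨fun k => ω (k - 1), funext fun k => by simp [shiftZ]⟩⟩
  ext s
  rw [MeasurableSpace.measurableSet_comap]
  constructor
  · rintro ⟨t, ht, rfl⟩
    rwa [hDinv, Set.image_preimage_eq _ hbij.2]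
  · exact fun hs => ⟨shiftZ '' s, (hDinv s).1 hs, Set.preimage_image_eq s hbij.1⟩

theorem comap_shiftZ_iterate_eq
    (hDinv : ∀ S : Set (ℤ → A), MeasurableSet[D] S ↔ MeasurableSet[D] (shiftZ '' S)) (n : ℕ) :
    D.comap (shiftZ^[n]) = D := by
  induction n with
  | zero => exact MeasurableSpace.comap_id
  | succ n ih =>
    rw [Function.iterate_succ, ← MeasurableSpace.comap_comp, ih, comap_shiftZ_eq hDinv]

variable [MeasurableSpace A]

theorem coordSigma_le_pi (s : Set ℤ) : coordSigma A s ≤ MeasurableSpace.pi :=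
  iSup₂_le fun k _ => (measurable_pi_apply k).comap_le

theorem coordSigma_mono {s t : Set ℤ} (h : s ⊆ t) : coordSigma A s ≤ coordSigma A t :=
  biSup_mono h

theorem coordSigma_iUnion {ι : Type*} (s : ι → Set ℤ) :
    coordSigma A (⋃ i, s i) = ⨆ i, coordSigma A (s i) :=
  iSup_iUnion _ _

theorem comap_coordSigma_add (c : ℤ) (s : Set ℤ) :
    (coordSigma A s).comap (fun ω k => ω (k + c)) = coordSigma A ((· + c) '' s) := by
  rw [coordSigma, coordSigma, iSup_image]
  simp only [MeasurableSpace.comap_iSup, MeasurableSpace.comap_comp]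
  rfl

theorem comap_coordSigma_shiftZ_iterate (n : ℕ) (s : Set ℤ) :
    (coordSigma A s).comap (shiftZ^[n]) = coordSigma A ((· + (n : ℤ)) '' s) := by
  rw [shiftZ_iterate, comap_coordSigma_add]

/-- A shift-invariant `D` is invariant under the inverse shift `ω ↦ ω (· - 1)` as well, which
moves the coordinates generating `D` one step into the past. -/
theorem le_coordSigma_image_sub_one
    (hDinv : ∀ S : Set (ℤ → A), MeasurableSet[D] S ↔ MeasurableSet[D] (shiftZ '' S))
    {s : Set ℤ} (hD : D ≤ coordSigma A s) : D ≤ coordSigma A ((· + -1) '' s) :=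
  calc D = (D.comap shiftZ).comap (fun ω k => ω (k + -1)) := by
        have hinv : shiftZ ∘ (fun ω k => ω (k + -1)) = (id : (ℤ → A) → ℤ → A) := by
          funext ω k
          simp [shiftZ]
        rw [MeasurableSpace.comap_comp, hinv, MeasurableSpace.comap_id]
    _ = D.comap (fun ω k => ω (k + -1)) := by rw [comap_shiftZ_eq hDinv]
    _ ≤ (coordSigma A s).comap (fun ω k => ω (k + -1)) := MeasurableSpace.comap_mono hD
    _ = coordSigma A ((· + -1) '' s) := comap_coordSigma_add _ _

end Shift

theorem ae_tendsto_condExp_sub_condExp_of_iSup_eq {Ω : Type*} {m0 : MeasurableSpace Ω}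
    {μ : Measure Ω} [IsFiniteMeasure μ] {ℱ 𝒢 : Filtration ℕ m0}
    (h : ⨆ n, ℱ n = ⨆ n, 𝒢 n) (g : Ω → ℝ) :
    ∀ᵐ x ∂μ, Tendsto (fun n => (μ[g|ℱ n]) x - (μ[g|𝒢 n]) x) atTop (𝓝 0) := by
  filter_upwards [tendsto_ae_condExp (ℱ := ℱ) g, tendsto_ae_condExp (ℱ := 𝒢) g] with x h₁ h₂
  simpa [h] using h₁.sub h₂

section Prediction

variable {A : Type*} [MeasurableSpace A]

/-- `F_{-n}^{-1}`. -/
def pastFiltration (A : Type*) [MeasurableSpace A] :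
    Filtration ℕ (MeasurableSpace.pi : MeasurableSpace (ℤ → A)) where
  seq n := coordSigma A (Set.Icc (-(n : ℤ)) (-1))
  mono' _ _ hmn := coordSigma_mono (Set.Icc_subset_Icc (by omega) le_rfl)
  le' _ := coordSigma_le_pi _

theorem pastFiltration_apply (n : ℕ) :
    pastFiltration A n = coordSigma A (Set.Icc (-(n : ℤ)) (-1)) := rfl

theorem iSup_pastFiltration :
    ⨆ n, pastFiltration A n = coordSigma A (Set.Iic (-1)) := by
  change ⨆ n : ℕ, coordSigma A (Set.Icc (-(n : ℤ)) (-1)) = _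
  rw [← coordSigma_iUnion]
  congr 1
  ext k
  simp only [Set.mem_iUnion, Set.mem_Icc, Set.mem_Iic]
  exact ⟨fun ⟨_, _, hk⟩ => hk, fun hk => ⟨k.natAbs, by omega, hk⟩⟩

variable [DecidableEq A] {μ : Measure (ℤ → A)}

theorem abs_condProbCoord_le_one (m : MeasurableSpace (ℤ → A)) (k : ℤ) (a : A) :
    ∀ᵐ ω ∂μ, |condProbCoord μ m k a ω| ≤ 1 :=
  ae_bdd_abs_condExp_of_ae_bdd_abs (Eventually.of_forall fun ω => by split_ifs <;> simp)

theorem integrable_indicator_coord [IsFiniteMeasure μ] [MeasurableSingletonClass A] (k : ℤ)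
    (a : A) : Integrable (fun ω : ℤ → A => if ω k = a then (1 : ℝ) else 0) μ :=
  (integrable_const (1 : ℝ)).mono'
    (Measurable.ite ((measurableSet_singleton a).preimage (measurable_pi_apply k))
      measurable_const measurable_const).aestronglyMeasurable
    (Eventually.of_forall fun ω => by split_ifs <;> simp)

theorem condProbCoord_comp_shiftZ_iterate [IsFiniteMeasure μ] [MeasurableSingletonClass A]
    (hstat : MeasurePreserving (shiftZ (A := A)) μ μ) {m : MeasurableSpace (ℤ → A)}
    (hm : m ≤ MeasurableSpace.pi) (n : ℕ) (k : ℤ) (a : A) :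
    condProbCoord μ m k a ∘ shiftZ^[n] =ᵐ[μ] condProbCoord μ (m.comap shiftZ^[n]) (k + n) a := by
  have hcomp : (fun ω : ℤ → A => if ω k = a then (1 : ℝ) else 0) ∘ shiftZ^[n] =
      fun ω => if ω (k + n) = a then 1 else 0 := by
    rw [shiftZ_iterate]
    rfl
  -- the local `m` would otherwise be taken as the instance on `ℤ → A`
  let _ : MeasurableSpace (ℤ → A) := MeasurableSpace.pi
  have h := condExp_comp_ae_eq (hstat.iterate n) hm (integrable_indicator_coord k a)
  rwa [hcomp] at h

variable [Fintype A]

/-- `‖μ(ζ_k = · | m) - μ(ζ_k = · | m')‖`. -/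
noncomputable def predictionGap (μ : Measure (ℤ → A)) (m m' : MeasurableSpace (ℤ → A)) (k : ℤ)
    (ω : ℤ → A) : ℝ :=
  ⨆ a : A, |condProbCoord μ m k a ω - condProbCoord μ m' k a ω|

theorem predictionGap_eq_norm [Nonempty A] (m m' : MeasurableSpace (ℤ → A)) (k : ℤ) (ω : ℤ → A) :
    predictionGap μ m m' k ω =
      ‖(fun a => condProbCoord μ m k a ω) - fun a => condProbCoord μ m' k a ω‖ :=
  (IsGreatest.pi_norm
    ((fun a => condProbCoord μ m k a ω) - fun a => condProbCoord μ m' k a ω)).csSup_eq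

theorem measurable_predictionGap {m m' : MeasurableSpace (ℤ → A)} (hm : m ≤ MeasurableSpace.pi)
    (hm' : m' ≤ MeasurableSpace.pi) (k : ℤ) :
    Measurable[MeasurableSpace.pi] (predictionGap μ m m' k) :=
  let _ : MeasurableSpace (ℤ → A) := MeasurableSpace.pi
  Measurable.iSup fun _ => ((stronglyMeasurable_condExp.mono hm).measurable.sub
    (stronglyMeasurable_condExp.mono hm').measurable).abs

theorem abs_predictionGap_le_two [Nonempty A] (m m' : MeasurableSpace (ℤ → A)) (k : ℤ) :
    ∀ᵐ ω ∂μ, |predictionGap μ m m' k ω| ≤ 2 := by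
  filter_upwards [ae_all_iff.2 (abs_condProbCoord_le_one (μ := μ) m k),
    ae_all_iff.2 (abs_condProbCoord_le_one (μ := μ) m' k)] with ω h h'
  rw [predictionGap_eq_norm, abs_norm]
  calc _ ≤ ‖fun a => condProbCoord μ m k a ω‖ + ‖fun a => condProbCoord μ m' k a ω‖ :=
        norm_sub_le _ _
    _ ≤ 1 + 1 := add_le_add ((pi_norm_le_iff_of_nonneg zero_le_one).2 h)
        ((pi_norm_le_iff_of_nonneg zero_le_one).2 h')
    _ = 2 := by norm_num

theorem predictionGap_comp_shiftZ_iterate [IsFiniteMeasure μ] [MeasurableSingletonClass A]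
    (hstat : MeasurePreserving (shiftZ (A := A)) μ μ) {m m' : MeasurableSpace (ℤ → A)}
    (hm : m ≤ MeasurableSpace.pi) (hm' : m' ≤ MeasurableSpace.pi) (n : ℕ) (k : ℤ) :
    predictionGap μ m m' k ∘ shiftZ^[n] =ᵐ[μ]
      predictionGap μ (m.comap shiftZ^[n]) (m'.comap shiftZ^[n]) (k + n) := by
  filter_upwards [ae_all_iff.2 fun a => condProbCoord_comp_shiftZ_iterate hstat hm n k a,
    ae_all_iff.2 fun a => condProbCoord_comp_shiftZ_iterate hstat hm' n k a] with ω h h'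
  exact iSup_congr fun a => by rw [← h a, ← h' a]; rfl

theorem ae_tendsto_predictionGap_pastFiltration [IsFiniteMeasure μ] [Nonempty A]
    {D : MeasurableSpace (ℤ → A)} (hD : D ≤ coordSigma A (Set.Iic (-1))) :
    ∀ᵐ ω ∂μ, Tendsto (fun n : ℕ =>
      predictionGap μ (pastFiltration A n) (pastFiltration A n ⊔ D) 0 ω) atTop (𝓝 0) := by
  set 𝒢 := pastFiltration A ⊔ Filtration.const ℕ D (hD.trans (coordSigma_le_pi _))
  have hsup : ⨆ n, pastFiltration A n = ⨆ n, 𝒢 n := by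
    change _ = ⨆ n, pastFiltration A n ⊔ D
    rw [← iSup_sup, iSup_pastFiltration, sup_eq_left.2 hD]
  filter_upwards [ae_all_iff.2 fun a => ae_tendsto_condExp_sub_condExp_of_iSup_eq (μ := μ) hsup
    fun ω => if ω 0 = a then (1 : ℝ) else 0] with ω hω
  simp_rw [predictionGap_eq_norm]
  have h := (tendsto_pi_nhds.2 hω).norm
  rw [← Pi.zero_def, norm_zero] at h
  exact h

end Prediction

/-- Theorem 2 of the paper: for a stationary `μ` on `A^ℤ` and a shift-invariant
sub-σ-algebra `D ⊆ F_{-∞}^0`, the predictions given `F_0^{n-1}` and given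
`F_0^{n-1} ∨ D` agree in the strong Cesàro sense, `μ`-a.s. -/
theorem weak_learnability_induced_decomposition
    {A : Type} [Fintype A] [Nonempty A] [DecidableEq A]
    [MeasurableSpace A] [MeasurableSingletonClass A]
    (μ : Measure (ℤ → A)) [IsProbabilityMeasure μ]
    (hstat : MeasurePreserving (shiftZ (A := A)) μ μ)
    (D : MeasurableSpace (ℤ → A)) (hD : D ≤ coordSigma A (Set.Iic 0))
    (hDinv : ∀ S : Set (ℤ → A), MeasurableSet[D] S ↔ MeasurableSet[D] (shiftZ '' S)) :
    ∀ᵐ ω ∂μ,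
      Tendsto (fun N : ℕ =>
          (∑ n ∈ Finset.range N, ⨆ a : A,
            |condProbCoord μ (coordSigma A (Set.Icc 0 ((n : ℤ) - 1))) n a ω -
              condProbCoord μ (coordSigma A (Set.Icc 0 ((n : ℤ) - 1)) ⊔ D) n a ω|) / N)
        atTop (nhds 0) := by
  let _ : MeasurableSpace (ℤ → A) := MeasurableSpace.pi
  have hD₁ : D ≤ coordSigma A (Set.Iic (-1)) := by
    simpa using le_coordSigma_image_sub_one hDinv hD
  have hDpi : D ≤ MeasurableSpace.pi := hD₁.trans (coordSigma_le_pi _)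
  set g : ℕ → (ℤ → A) → ℝ := fun n =>
    predictionGap μ (pastFiltration A n) (pastFiltration A n ⊔ D) 0
  have hshift : ∀ n : ℕ, g n ∘ shiftZ^[n] =ᵐ[μ] predictionGap μ
      (coordSigma A (Set.Icc 0 ((n : ℤ) - 1))) (coordSigma A (Set.Icc 0 ((n : ℤ) - 1)) ⊔ D) n := by
    intro n
    have h := predictionGap_comp_shiftZ_iterate hstat ((pastFiltration A).le n)
      (sup_le ((pastFiltration A).le n) hDpi) n 0
    rwa [MeasurableSpace.comap_sup, comap_shiftZ_iterate_eq hDinv, pastFiltration_apply,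
      comap_coordSigma_shiftZ_iterate, Set.image_add_const_Icc, neg_add_cancel, zero_add,
      neg_add_eq_sub] at h
  filter_upwards [ae_tendsto_sum_comp_iterate_div_of_tendsto_zero hstat
      (fun n => measurable_predictionGap ((pastFiltration A).le n)
        (sup_le ((pastFiltration A).le n) hDpi) 0)
      (fun n => abs_predictionGap_le_two _ _ 0)
      (ae_tendsto_predictionGap_pastFiltration hD₁),
    ae_all_iff.2 hshift] with ω hω hω'
  refine hω.congr fun N => ?_
  congr 1
  exact Finset.sum_congr rfl fun n _ => hω' n
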